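/- Let X be a metric space, w a finite path (edge-path of finite length) in a graph X, and 0 < W < |w|. Define c_{w,W}(x,y) = d(x,y) - inf_α(|α| - W·|α|_w), where α ranges over all paths from x to y and |α|_w is the maximal number of non-overlapping copies of w in α. Then for all x, y, z ∈ X: |c_{w,W}(x,y) - c_{w,W}(x,z)| ≤ 2·d(y,z). -/

import Mathlib

section Fujiwara

variable {V G : Type*}

/-- A (nonempty) edge-path in the graph `X`, recorded as its list of vertices. -/
def IsPathList (X : SimpleGraph V) (l : List V) : Prop :=
  l ≠ [] ∧ l.Chain' X.Adj

/-- A path in `X` from `x` to `y`. -/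
def PathFromTo (X : SimpleGraph V) (l : List V) (x y : V) : Prop :=
  IsPathList X l ∧ l.head? = some x ∧ l.getLast? = some y

/-- The length of a path (number of edges). -/
def pathLen (l : List V) : ℝ := (l.length : ℝ) - 1

/-- `c` is a copy of the path `w`, i.e. a `G`-translate of `w`. -/
def IsCopy [Group G] [MulAction G V] (w c : List V) : Prop :=
  ∃ g : G, c = w.map (fun v => g • v)

/-- `CopiesLE w n α` : the path `α` contains at least `n` non-overlapping copies of `w`. -/
def CopiesLE [Group G] [MulAction G V] (w : List V) : ℕ → List V → Prop
  | 0, _ => True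
  | n + 1, α => ∃ pre c suf : List V,
      α = pre ++ c ++ suf ∧ IsCopy (G := G) w c ∧ CopiesLE w n suf

/-- `|α|_w`, the maximal number of non-overlapping copies of `w` in `α`. -/
noncomputable def copyCount (G : Type*) [Group G] [MulAction G V] (w α : List V) : ℕ :=
  sSup {n : ℕ | CopiesLE (G := G) w n α}

/-- Fujiwara's counting function
`c_{w,W}(x,y) = d(x,y) - inf_α (|α| - W·|α|_w)`. -/
noncomputable def fujiC (G : Type*) [Group G] [MulAction G V] (X : SimpleGraph V)
    (d : V → V → ℝ) (w : List V) (W : ℕ) (x y : V) : ℝ :=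
  d x y - sInf {r : ℝ | ∃ α : List V, PathFromTo X α x y ∧
    r = pathLen α - (W : ℝ) * (copyCount G w α : ℝ)}

end Fujiwara

/-! Appending a path `β` from `y` to `z` to a path `α` ending at `y` adds `|β|` to the length and
can only increase the number of disjoint copies of `w`. Hence both `d(x, ·)` and
`inf_α (|α| - W·|α|_w)` change by at most `d(y, z)` between `y` and `z` (using symmetry of `d`),
and `c_{w,W}(x, ·)` by at most `2 d(y, z)`. The weighted infimum is finite because `n` disjoint
copies of `w` occupy `n·#w ≥ n·W` vertices of `α`, so `|α| - W·|α|_w ≥ -1`. -/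

section Paths

variable {V : Type*} {X : SimpleGraph V}

theorem SimpleGraph.Walk.pathFromTo_support {x y : V} (p : X.Walk x y) :
    PathFromTo X p.support x y := by
  refine ⟨⟨p.support_ne_nil, p.isChain_adj_support⟩, ?_, ?_⟩
  · rw [List.head?_eq_some_head p.support_ne_nil, p.head_support]
  · rw [List.getLast?_eq_some_getLast p.support_ne_nil, p.getLast_support]

theorem PathFromTo.reverse {l : List V} {x y : V} (h : PathFromTo X l x y) :
    PathFromTo X l.reverse y x := by
  obtain ⟨⟨hne, hchain⟩, hx, hy⟩ := h
  refine ⟨⟨by simpa using hne, ?_⟩, by simpa using hy, by simpa using hx⟩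
  exact List.isChain_reverse.2 (hchain.imp fun _ _ hab => hab.symm)

theorem PathFromTo.append_tail {α β : List V} {x y z : V} (hα : PathFromTo X α x y)
    (hβ : PathFromTo X β y z) : PathFromTo X (α ++ β.tail) x z := by
  obtain ⟨⟨-, hαc⟩, hαx, hαy⟩ := hα
  obtain ⟨⟨-, hβc⟩, hβy, hβz⟩ := hβ
  obtain ⟨α', rfl⟩ := List.getLast?_eq_some_iff.1 hαy
  obtain ⟨t, rfl⟩ := List.head?_eq_some_iff.1 hβy
  refine ⟨⟨by simp, ?_⟩, ?_, ?_⟩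
  · have h := hαc.append_overlap hβc (List.cons_ne_nil y [])
    simp only [List.append_assoc, List.singleton_append, List.tail_cons] at h ⊢
    exact h
  · simpa using hαx
  · cases t <;> simpa using hβz

theorem IsPathList.pathLen_nonneg {l : List V} (h : IsPathList X l) : 0 ≤ pathLen l := by
  have : 1 ≤ l.length := List.length_pos_iff.2 h.1
  simp only [pathLen, sub_nonneg]
  exact_mod_cast this

theorem pathLen_reverse (l : List V) : pathLen l.reverse = pathLen l := by
  simp [pathLen]

theorem pathLen_append_tail (α : List V) {β : List V} (hβ : β ≠ []) :
    pathLen (α ++ β.tail) = pathLen α + pathLen β := by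
  obtain ⟨b, t, rfl⟩ := List.exists_cons_of_ne_nil hβ
  simp only [pathLen, List.tail_cons, List.length_append, List.length_cons]
  push_cast
  ring

end Paths

section Copies

variable {V G : Type*} [Group G] [MulAction G V] {w : List V}

theorem CopiesLE.append_right : ∀ {n : ℕ} {α : List V} (γ : List V),
    CopiesLE (G := G) w n α → CopiesLE (G := G) w n (α ++ γ)
  | 0, _, _, _ => trivial
  | _ + 1, _, γ, ⟨pre, c, suf, hα, hc, hsuf⟩ =>
    ⟨pre, c, suf ++ γ, by simp [hα], hc, hsuf.append_right γ⟩

theorem CopiesLE.mul_length_le : ∀ {n : ℕ} {α : List V},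
    CopiesLE (G := G) w n α → n * w.length ≤ α.length
  | 0, _, _ => by simp
  | n + 1, _, ⟨pre, c, suf, hα, ⟨g, hc⟩, hsuf⟩ => by
    have := hsuf.mul_length_le
    subst hα hc
    simp only [List.length_append, List.length_map]
    rw [Nat.succ_mul]
    omega

theorem bddAbove_copiesLE (hw : w ≠ []) (α : List V) :
    BddAbove {n : ℕ | CopiesLE (G := G) w n α} := by
  refine ⟨α.length, fun n hn => ?_⟩
  calc n ≤ n * w.length := Nat.le_mul_of_pos_right n (List.length_pos_iff.2 hw)
    _ ≤ α.length := hn.mul_length_le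

theorem copiesLE_copyCount (hw : w ≠ []) (α : List V) :
    CopiesLE (G := G) w (copyCount G w α) α :=
  Nat.sSup_mem ⟨0, by trivial⟩ (bddAbove_copiesLE hw α)

theorem copyCount_le_copyCount_append (hw : w ≠ []) (α β : List V) :
    copyCount G w α ≤ copyCount G w (α ++ β) :=
  le_csSup (bddAbove_copiesLE hw _) ((copiesLE_copyCount hw α).append_right β)

theorem copyCount_mul_length_le (hw : w ≠ []) (α : List V) :
    copyCount G w α * w.length ≤ α.length :=
  (copiesLE_copyCount (G := G) hw α).mul_length_le

end Copies

theorem csInf_le_csInf_add {M : Type*} [ConditionallyCompleteLattice M] [AddCommGroup M]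
    [IsOrderedAddMonoid M] {A B C : Set M} (hC : BddBelow C) (hA : A.Nonempty)
    (hB : B.Nonempty) (h : ∀ a ∈ A, ∀ b ∈ B, ∃ c ∈ C, c ≤ a + b) :
    sInf C ≤ sInf A + sInf B := by
  rw [← sub_le_iff_le_add']
  refine le_csInf hB fun b hb => ?_
  rw [sub_le_comm]
  refine le_csInf hA fun a ha => ?_
  obtain ⟨c, hc, hcab⟩ := h a ha b hb
  rw [sub_le_iff_le_add]
  exact (csInf_le hC hc).trans hcab

section PathInf

variable {V : Type*} {X : SimpleGraph V}

noncomputable def pathInf (X : SimpleGraph V) (f : List V → ℝ) (x y : V) : ℝ :=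
  sInf {r : ℝ | ∃ α : List V, PathFromTo X α x y ∧ r = f α}

theorem pathInf_pathLen_comm (x y : V) : pathInf X pathLen x y = pathInf X pathLen y x := by
  have hsub : ∀ a b : V, {r : ℝ | ∃ α : List V, PathFromTo X α a b ∧ r = pathLen α} ⊆
      {r : ℝ | ∃ α : List V, PathFromTo X α b a ∧ r = pathLen α} := by
    rintro a b _ ⟨α, hα, rfl⟩
    exact ⟨α.reverse, hα.reverse, (pathLen_reverse α).symm⟩
  exact congrArg sInf ((hsub x y).antisymm (hsub y x))

variable {f : List V → ℝ} {m : ℝ}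

theorem pathInf_le_add (hconn : X.Connected) (hm : ∀ α, IsPathList X α → m ≤ f α)
    (hcat : ∀ α β : List V, β ≠ [] → f (α ++ β.tail) ≤ f α + pathLen β) (x y z : V) :
    pathInf X f x z ≤ pathInf X f x y + pathInf X pathLen y z := by
  have hne : ∀ (g : List V → ℝ) (a b : V),
      {r : ℝ | ∃ α : List V, PathFromTo X α a b ∧ r = g α}.Nonempty := fun g a b =>
    let ⟨p⟩ := hconn a b
    ⟨_, p.support, p.pathFromTo_support, rfl⟩
  refine csInf_le_csInf_add ⟨m, ?_⟩ (hne f x y) (hne pathLen y z) ?_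
  · rintro _ ⟨α, hα, rfl⟩
    exact hm α hα.1
  · rintro _ ⟨α, hα, rfl⟩ _ ⟨β, hβ, rfl⟩
    exact ⟨_, ⟨α ++ β.tail, hα.append_tail hβ, rfl⟩, hcat α β hβ.1.1⟩

theorem abs_pathInf_sub_pathInf_le (hconn : X.Connected) (hm : ∀ α, IsPathList X α → m ≤ f α)
    (hcat : ∀ α β : List V, β ≠ [] → f (α ++ β.tail) ≤ f α + pathLen β) (x y z : V) :
    |pathInf X f x y - pathInf X f x z| ≤ pathInf X pathLen y z := by
  have hy := pathInf_le_add hconn hm hcat x z y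
  have hz := pathInf_le_add hconn hm hcat x y z
  rw [pathInf_pathLen_comm z y] at hy
  rw [abs_le]
  constructor <;> linarith

end PathInf

section WeightedLen

variable {V : Type*} (G : Type*) [Group G] [MulAction G V] {w : List V}

noncomputable def weightedLen (w : List V) (W : ℕ) (α : List V) : ℝ :=
  pathLen α - W * copyCount G w α

theorem neg_one_le_weightedLen (hw : w ≠ []) {W : ℕ} (hW : (W : ℝ) ≤ w.length)
    (α : List V) : -1 ≤ weightedLen G w W α := by
  have hcount : (copyCount G w α : ℝ) * w.length ≤ α.length := by
    exact_mod_cast copyCount_mul_length_le hw α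
  have : (W : ℝ) * copyCount G w α ≤ copyCount G w α * w.length := by
    rw [mul_comm]
    exact mul_le_mul_of_nonneg_left hW (Nat.cast_nonneg _)
  simp only [weightedLen, pathLen]
  linarith

theorem weightedLen_append_tail_le (hw : w ≠ []) (W : ℕ) (α : List V) {β : List V}
    (hβ : β ≠ []) : weightedLen G w W (α ++ β.tail) ≤ weightedLen G w W α + pathLen β := by
  have hcount : (copyCount G w α : ℝ) ≤ copyCount G w (α ++ β.tail) := by
    exact_mod_cast copyCount_le_copyCount_append hw α β.tail
  simp only [weightedLen, pathLen_append_tail α hβ]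
  nlinarith [(Nat.cast_nonneg W : (0 : ℝ) ≤ W)]

theorem fujiC_eq {X : SimpleGraph V} (d : V → V → ℝ) (w : List V) (W : ℕ) (x y : V) :
    fujiC G X d w W x y = d x y - pathInf X (weightedLen G w W) x y :=
  rfl

end WeightedLen

theorem stmt_6_general {V G : Type*} [Group G] [MulAction G V] (X : SimpleGraph V)
    (hconn : X.Connected)
    (d : V → V → ℝ)
    (hd : ∀ x y : V,
      d x y = sInf {r : ℝ | ∃ α : List V, PathFromTo X α x y ∧ r = pathLen α})
    (w : List V) (W : ℕ) (hWlt : (W : ℝ) < pathLen w) :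
    ∀ x y z : V,
      |fujiC G X d w W x y - fujiC G X d w W x z| ≤ 2 * d y z := by
  intro x y z
  have hW : (W : ℝ) ≤ w.length := by
    unfold pathLen at hWlt
    linarith
  have hw : w ≠ [] := by
    rintro rfl
    norm_num [pathLen] at hWlt
    linarith [(Nat.cast_nonneg W : (0 : ℝ) ≤ W)]
  have hd' : d = pathInf X pathLen := funext₂ hd
  have hdist := abs_pathInf_sub_pathInf_le hconn (fun _ hα => hα.pathLen_nonneg)
    (fun α _ hβ => (pathLen_append_tail α hβ).le) x y z
  have hcount := abs_pathInf_sub_pathInf_le hconn (fun α _ => neg_one_le_weightedLen G hw hW α)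
    (fun α _ hβ => weightedLen_append_tail_le G hw W α hβ) x y z
  rw [fujiC_eq, fujiC_eq, hd']
  calc _ = |(pathInf X pathLen x y - pathInf X pathLen x z) -
        (pathInf X (weightedLen G w W) x y - pathInf X (weightedLen G w W) x z)| := by ring_nf
    _ ≤ _ := abs_sub _ _
    _ ≤ 2 * pathInf X pathLen y z := by linarith

/-- Fujiwara's Lemma 3.4: `|c_{w,W}(x,y) - c_{w,W}(x,z)| ≤ 2 d(y,z)`. -/
theorem stmt_6 {V G : Type*} [Group G] [MulAction G V] (X : SimpleGraph V)
    (hconn : X.Connected)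
    (hact : ∀ (g : G) (a b : V), X.Adj a b → X.Adj (g • a) (g • b))
    (d : V → V → ℝ)
    (hd : ∀ x y : V,
      d x y = sInf {r : ℝ | ∃ α : List V, PathFromTo X α x y ∧ r = pathLen α})
    (w : List V) (hw : IsPathList X w) (W : ℕ) (hW0 : 0 < W) (hWlt : (W : ℝ) < pathLen w) :
    ∀ x y z : V,
      |fujiC G X d w W x y - fujiC G X d w W x z| ≤ 2 * d y z :=
  stmt_6_general X hconn d hd w W hWlt
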